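/- arXiv:1206.5959 — 2 statements merged into one kernel-verified Lean document; each statement's English description precedes it below -/
import Mathlib

section
/- Let T be a shortest path tree to destination t in an undirected nonnegatively edge-weighted graph G, and let uu' be an edge of T (u' the parent of u). Then for any edge vw ∉ T with v in the subtree T_u rooted at u and w not in T_u, minimizing d_G(u,v) + ℓ(vw) + d_G(w,t), one has d_{G−uu'}(u,t) = d_G(u,v) + ℓ(vw) + d_G(w,t). -/
open scoped ENNReal

noncomputable section

/-- The length of a walk w.r.t. edge weights `ℓ`. -/
def wlen {V : Type*} {G : SimpleGraph V} (ℓ : Sym2 V → ℝ≥0∞) {u v : V} (p : G.Walk u v) : ℝ≥0∞ :=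
  (p.edges.map ℓ).sum

/-- Weighted shortest-path distance in `G`. -/
def wdist {V : Type*} (G : SimpleGraph V) (ℓ : Sym2 V → ℝ≥0∞) (u v : V) : ℝ≥0∞ :=
  ⨅ p : G.Walk u v, wlen ℓ p

/-- `s_u^{-e}`: the shortest `u`-`t` distance in `G` with edge `e` removed. -/
def sval {V : Type*} (G : SimpleGraph V) (ℓ : Sym2 V → ℝ≥0∞) (t : V) (e : Sym2 V) (u : V) :
    ℝ≥0∞ :=
  wdist (G.deleteEdges {e}) ℓ u t

/-- The supremum, over edges `uu'` of the walk (u nearer the start), of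
`ℓ(P[v,u]) + s_u^{-uu'}`. -/
def detourSup {V : Type*} (G : SimpleGraph V) (ℓ : Sym2 V → ℝ≥0∞) (t : V) :
    ∀ {v : V}, G.Walk v t → ℝ≥0∞
  | _, SimpleGraph.Walk.nil => 0
  | v, @SimpleGraph.Walk.cons _ _ _ w _ _h p =>
      max (sval G ℓ t s(v, w) v) (ℓ s(v, w) + detourSup G ℓ t p)

/-- The robust length `Val(P)` of a `v`-`t` walk `P`. -/
def rVal {V : Type*} (G : SimpleGraph V) (ℓ : Sym2 V → ℝ≥0∞) (t : V) {v : V}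
    (p : G.Walk v t) : ℝ≥0∞ :=
  max (wlen ℓ p) (detourSup G ℓ t p)

/-- The potential `y(v)`: minimum robust length over all simple `v`-`t` paths. -/
def pot {V : Type*} (G : SimpleGraph V) (ℓ : Sym2 V → ℝ≥0∞) (t v : V) : ℝ≥0∞ :=
  ⨅ p : {p : G.Walk v t // p.IsPath}, rVal G ℓ t p.1


/-! Removing `uu'` cuts `T` into `T_u`, the vertices that no longer reach `t` in `T − uu'`, and the
rest. A `u`–`t` walk in `G − uu'` must leave `T_u` along a non-tree edge `ab`, and the part of
the walk up to `a` and after `b` is at least `d(u,a)` and `d(b,t)`; so it is no shorter than the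
minimum. Conversely the walk `u ⇝ v → w ⇝ t` along tree paths avoids `uu'`, and both tree paths
are shortest: `w ⇝ t` because `T` is a shortest path tree, `u ⇝ v` because the tree path from `v`
to `t` runs through `u`. -/

open SimpleGraph

section

variable {V : Type*} {G H T : SimpleGraph V} {ℓ : Sym2 V → ℝ≥0∞} {a b c : V}

@[simp] lemma wlen_nil : wlen ℓ (Walk.nil : G.Walk a a) = 0 := by
  simp [wlen]

@[simp] lemma wlen_cons (h : G.Adj a b) (p : G.Walk b c) :
    wlen ℓ (Walk.cons h p) = ℓ s(a, b) + wlen ℓ p := by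
  simp [wlen]

lemma wlen_append (p : G.Walk a b) (q : G.Walk b c) :
    wlen ℓ (p.append q) = wlen ℓ p + wlen ℓ q := by
  simp [wlen]

@[simp] lemma wlen_reverse (p : G.Walk a b) : wlen ℓ p.reverse = wlen ℓ p := by
  simp [wlen, List.sum_reverse]

@[simp] lemma wlen_mapLe (h : G ≤ H) (p : G.Walk a b) : wlen ℓ (p.mapLe h) = wlen ℓ p := by
  simp [wlen, Walk.mapLe, Walk.edges_map]

lemma wlen_bypass_le [DecidableEq V] (p : G.Walk a b) : wlen ℓ p.bypass ≤ wlen ℓ p := by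
  obtain ⟨l, hperm, hsub⟩ := p.bypass_isPath.edges_nodup.subperm p.edges_bypass_subset_edges
  rw [wlen, wlen, ← (hperm.map ℓ).sum_eq]
  exact (hsub.map ℓ).sum_le_sum fun _ _ ↦ zero_le

lemma wdist_le_wlen (p : G.Walk a b) : wdist G ℓ a b ≤ wlen ℓ p :=
  iInf_le _ p

@[simp] lemma wdist_self : wdist G ℓ a a = 0 :=
  nonpos_iff_eq_zero.mp ((wdist_le_wlen Walk.nil).trans_eq wlen_nil)

lemma wdist_comm : wdist G ℓ a b = wdist G ℓ b a :=
  le_antisymm (le_iInf fun p ↦ (wdist_le_wlen p.reverse).trans_eq (wlen_reverse p))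
    (le_iInf fun p ↦ (wdist_le_wlen p.reverse).trans_eq (wlen_reverse p))

lemma wdist_le_of_adj (h : G.Adj a b) : wdist G ℓ a b ≤ ℓ s(a, b) :=
  (wdist_le_wlen (Walk.cons h Walk.nil)).trans_eq (by simp)

lemma wdist_triangle : wdist G ℓ a c ≤ wdist G ℓ a b + wdist G ℓ b c :=
  calc wdist G ℓ a c ≤ ⨅ (p : G.Walk a b) (q : G.Walk b c), wlen ℓ p + wlen ℓ q :=
        le_iInf₂ fun p q ↦ (wdist_le_wlen (p.append q)).trans_eq (wlen_append p q)
    _ = wdist G ℓ a b + wdist G ℓ b c := by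
        simp only [wdist, ENNReal.iInf_add, ENNReal.add_iInf]
        exact iInf_comm

lemma wdist_le_add_add_of_adj {x y : V} (h : G.Adj a b) :
    wdist G ℓ x y ≤ wdist G ℓ x a + ℓ s(a, b) + wdist G ℓ b y :=
  calc wdist G ℓ x y ≤ wdist G ℓ x b + wdist G ℓ b y := wdist_triangle
    _ ≤ wdist G ℓ x a + wdist G ℓ a b + wdist G ℓ b y := by gcongr; exact wdist_triangle
    _ ≤ wdist G ℓ x a + ℓ s(a, b) + wdist G ℓ b y := by gcongr; exact wdist_le_of_adj h

lemma wdist_anti (h : H ≤ G) : wdist G ℓ a b ≤ wdist H ℓ a b :=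
  le_iInf fun p ↦ (wdist_le_wlen (p.mapLe h)).trans_eq (wlen_mapLe h p)

lemma SimpleGraph.IsAcyclic.wdist_eq_wlen (hT : T.IsAcyclic) {p : T.Walk a b} (hp : p.IsPath) :
    wdist T ℓ a b = wlen ℓ p := by
  classical
  refine le_antisymm (wdist_le_wlen p) (le_iInf fun q ↦ ?_)
  have hq : q.bypass = p :=
    congrArg Subtype.val ((hT.subsingleton_path a b).elim ⟨q.bypass, q.bypass_isPath⟩ ⟨p, hp⟩)
  exact hq ▸ wlen_bypass_le q

lemma SimpleGraph.IsAcyclic.wdist_eq_of_le (hT : T.IsAcyclic) (hH : H ≤ T) (h : H.Reachable a b) :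
    wdist H ℓ a b = wdist T ℓ a b := by
  classical
  obtain ⟨p⟩ := h
  refine le_antisymm ?_ (wdist_anti hH)
  calc wdist H ℓ a b ≤ wlen ℓ p.bypass := wdist_le_wlen _
    _ = wlen ℓ (p.bypass.mapLe hH) := (wlen_mapLe hH _).symm
    _ = wdist T ℓ a b := (hT.wdist_eq_wlen (p.bypass_isPath.mapLe hH)).symm

lemma le_add_wlen_of_forall_boundary_edge (S : Set V) (f : V → ℝ≥0∞) {M : ℝ≥0∞} {z : V}
    (hz : z ∉ S) (hf : ∀ a b, G.Adj a b → f b ≤ f a + ℓ s(a, b))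
    (hbdry : ∀ a b, G.Adj a b → a ∈ S → b ∉ S → M ≤ f a + ℓ s(a, b) + wdist G ℓ b z)
    {x : V} (p : G.Walk x z) (hx : x ∈ S) : M ≤ f x + wlen ℓ p := by
  induction p with
  | nil => exact absurd hx hz
  | @cons a b _ hab p ih =>
    rw [wlen_cons, ← add_assoc]
    by_cases hb : b ∈ S
    · exact (ih hz hbdry hb).trans (by gcongr; exact hf a b hab)
    · exact (hbdry a b hab hx hb).trans (by gcongr; exact wdist_le_wlen p)

lemma le_add_wdist_of_forall_boundary_edge (S : Set V) (f : V → ℝ≥0∞) {M : ℝ≥0∞} {x z : V}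
    (hx : x ∈ S) (hz : z ∉ S) (hf : ∀ a b, G.Adj a b → f b ≤ f a + ℓ s(a, b))
    (hbdry : ∀ a b, G.Adj a b → a ∈ S → b ∉ S → M ≤ f a + ℓ s(a, b) + wdist G ℓ b z) :
    M ≤ f x + wdist G ℓ x z := by
  rw [wdist, ENNReal.add_iInf]
  exact le_iInf fun p ↦ le_add_wlen_of_forall_boundary_edge S f hz hf hbdry p hx

lemma reachable_deleteEdges_left_or_right (hG : G.Preconnected) (u u' x : V) :
    (G.deleteEdges {s(u, u')}).Reachable x u ∨ (G.deleteEdges {s(u, u')}).Reachable x u' := by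
  obtain ⟨p⟩ := hG x u
  suffices ∀ {y z : V} (q : G.Walk y z), (G.deleteEdges {s(u, u')}).Reachable z u ∨
      (G.deleteEdges {s(u, u')}).Reachable z u' → (G.deleteEdges {s(u, u')}).Reachable y u ∨
      (G.deleteEdges {s(u, u')}).Reachable y u' from this p (Or.inl .rfl)
  intro y z q
  induction q with
  | nil => exact id
  | @cons a b _ hab q ih =>
    intro hz
    by_cases he : s(a, b) = s(u, u')
    · rcases Sym2.eq_iff.mp he with ⟨rfl, -⟩ | ⟨rfl, -⟩
      exacts [Or.inl .rfl, Or.inr .rfl]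
    · have hadj : (G.deleteEdges {s(u, u')}).Adj a b := by simpa [he] using hab
      exact (ih hz).imp hadj.reachable.trans hadj.reachable.trans

lemma le_wdist_deleteEdges_of_forall_boundary_edge {e : Sym2 V} {u t : V} {M : ℝ≥0∞}
    (hu : ¬ (T.deleteEdges {e}).Reachable u t)
    (hmin : ∀ a b, G.Adj a b → ¬ T.Adj a b → ¬ (T.deleteEdges {e}).Reachable a t →
      (T.deleteEdges {e}).Reachable b t → M ≤ wdist G ℓ u a + ℓ s(a, b) + wdist G ℓ b t) :
    M ≤ wdist (G.deleteEdges {e}) ℓ u t := by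
  have hf (a b : V) (hab : (G.deleteEdges {e}).Adj a b) :
      wdist G ℓ u b ≤ wdist G ℓ u a + ℓ s(a, b) := by
    simpa using wdist_le_add_add_of_adj (x := u) (y := b) (deleteEdges_le _ hab)
  have hbdry (a b : V) (hab : (G.deleteEdges {e}).Adj a b)
      (ha : ¬ (T.deleteEdges {e}).Reachable a t) (hb : ¬ ¬ (T.deleteEdges {e}).Reachable b t) :
      M ≤ wdist G ℓ u a + ℓ s(a, b) + wdist (G.deleteEdges {e}) ℓ b t := by
    rw [not_not] at hb
    have hnt : ¬ T.Adj a b := fun hT ↦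
      ha (((deleteEdges_adj ..).mpr ⟨hT, ((deleteEdges_adj ..).mp hab).2⟩).reachable.trans hb)
    calc M ≤ _ := hmin a b (deleteEdges_le _ hab) hnt ha hb
      _ ≤ _ := by gcongr; exact wdist_anti (deleteEdges_le _)
  simpa using le_add_wdist_of_forall_boundary_edge {x | ¬ (T.deleteEdges {e}).Reachable x t}
    (wdist G ℓ u) hu (not_not.mpr .rfl) hf hbdry

lemma wdist_add_wdist_le_of_not_reachable_deleteEdges {u u' v t : V}
    (hu' : (T.deleteEdges {s(u, u')}).Reachable u' t)
    (hv : ¬ (T.deleteEdges {s(u, u')}).Reachable v t) :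
    wdist T ℓ v u + wdist T ℓ u t ≤ wdist T ℓ v t := by
  have hf (a b : V) (hab : T.Adj a b) : wdist T ℓ v b ≤ wdist T ℓ v a + ℓ s(a, b) := by
    simpa using wdist_le_add_add_of_adj (x := v) (y := b) hab
  have hbdry (a b : V) (hab : T.Adj a b)
      (ha : ¬ (T.deleteEdges {s(u, u')}).Reachable a t)
      (hb : ¬ ¬ (T.deleteEdges {s(u, u')}).Reachable b t) :
      wdist T ℓ v u + wdist T ℓ u t ≤ wdist T ℓ v a + ℓ s(a, b) + wdist T ℓ b t := by
    rw [not_not] at hb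
    have he : s(a, b) = s(u, u') := by
      by_contra he
      exact ha (((deleteEdges_adj ..).mpr ⟨hab, he⟩).reachable.trans hb)
    rcases Sym2.eq_iff.mp he with ⟨rfl, rfl⟩ | ⟨rfl, -⟩
    · rw [add_assoc]
      gcongr
      simpa using wdist_le_add_add_of_adj (x := a) (y := t) hab
    · exact absurd hu' ha
  simpa using le_add_wdist_of_forall_boundary_edge {x | ¬ (T.deleteEdges {s(u, u')}).Reachable x t}
    (wdist T ℓ v) hv (not_not.mpr .rfl) hf hbdry

lemma wdist_le_of_add_wdist_le {t x y : V} (hspt : ∀ z, wdist T ℓ z t = wdist G ℓ z t)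
    (hsplit : wdist T ℓ x y + wdist T ℓ y t ≤ wdist T ℓ x t) (hy : wdist G ℓ y t ≠ ⊤) :
    wdist T ℓ x y ≤ wdist G ℓ x y := by
  rw [hspt, hspt] at hsplit
  exact (ENNReal.add_le_add_iff_right hy).mp (hsplit.trans wdist_triangle)

lemma wdist_deleteEdges_le {u u' v w t : V} (hTG : T ≤ G) (hT : T.IsTree)
    (hspt : ∀ x, wdist T ℓ x t = wdist G ℓ x t) (huu' : T.Adj u u')
    (hparent : (T.deleteEdges {s(u, u')}).Reachable u' t)
    (hvw : G.Adj v w) (hnt : ¬ T.Adj v w)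
    (hvin : ¬ (T.deleteEdges {s(u, u')}).Reachable v t)
    (hwout : (T.deleteEdges {s(u, u')}).Reachable w t) :
    wdist (G.deleteEdges {s(u, u')}) ℓ u t ≤ wdist G ℓ u v + ℓ s(v, w) + wdist G ℓ w t := by
  by_cases hfin : wdist G ℓ u t = ⊤
  · have hM := wdist_le_add_add_of_adj (ℓ := ℓ) (x := u) (y := t) hvw
    rw [hfin, top_le_iff] at hM
    exact hM ▸ le_top
  have hTGe : T.deleteEdges {s(u, u')} ≤ G.deleteEdges {s(u, u')} := deleteEdges_mono hTG
  have hvu : (T.deleteEdges {s(u, u')}).Reachable v u :=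
    (reachable_deleteEdges_left_or_right hT.connected.preconnected u u' v).resolve_right
      fun h ↦ hvin (h.trans hparent)
  have huv : wdist (G.deleteEdges {s(u, u')}) ℓ u v ≤ wdist G ℓ u v :=
    calc _ ≤ wdist (T.deleteEdges {s(u, u')}) ℓ v u := wdist_comm.trans_le (wdist_anti hTGe)
      _ = wdist T ℓ v u := hT.isAcyclic.wdist_eq_of_le (deleteEdges_le _) hvu
      _ ≤ wdist G ℓ v u := wdist_le_of_add_wdist_le hspt
          (wdist_add_wdist_le_of_not_reachable_deleteEdges hparent hvin) hfin
      _ = wdist G ℓ u v := wdist_comm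
  have hwt : wdist (G.deleteEdges {s(u, u')}) ℓ w t ≤ wdist G ℓ w t :=
    calc _ ≤ wdist (T.deleteEdges {s(u, u')}) ℓ w t := wdist_anti hTGe
      _ = wdist T ℓ w t := hT.isAcyclic.wdist_eq_of_le (deleteEdges_le _) hwout
      _ = wdist G ℓ w t := hspt w
  have hvw' : (G.deleteEdges {s(u, u')}).Adj v w := by
    refine (deleteEdges_adj ..).mpr ⟨hvw, fun he ↦ hnt ?_⟩
    rcases Sym2.eq_iff.mp he with ⟨rfl, rfl⟩ | ⟨rfl, rfl⟩
    exacts [huu', huu'.symm]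
  exact (wdist_le_add_add_of_adj hvw').trans (by gcongr)

end

theorem replacement_dist_eq_min_detour_general {V : Type*}
    (G T : SimpleGraph V) (ℓ : Sym2 V → ℝ≥0∞) (t : V)
    (hTG : T ≤ G) (hT : T.IsTree)
    (hspt : ∀ x : V, wdist T ℓ x t = wdist G ℓ x t)
    (u u' : V) (huu' : T.Adj u u')
    (hchild : ¬ (T.deleteEdges {s(u, u')}).Reachable u t)
    (hparent : (T.deleteEdges {s(u, u')}).Reachable u' t)
    (v w : V) (hvw : G.Adj v w) (hnt : ¬ T.Adj v w)
    (hvin : ¬ (T.deleteEdges {s(u, u')}).Reachable v t)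
    (hwout : (T.deleteEdges {s(u, u')}).Reachable w t)
    (hmin : ∀ v' w' : V, G.Adj v' w' → ¬ T.Adj v' w' →
      ¬ (T.deleteEdges {s(u, u')}).Reachable v' t →
      (T.deleteEdges {s(u, u')}).Reachable w' t →
      wdist G ℓ u v + ℓ s(v, w) + wdist G ℓ w t ≤
        wdist G ℓ u v' + ℓ s(v', w') + wdist G ℓ w' t) :
    wdist (G.deleteEdges {s(u, u')}) ℓ u t =
      wdist G ℓ u v + ℓ s(v, w) + wdist G ℓ w t :=
  le_antisymm (wdist_deleteEdges_le hTG hT hspt huu' hparent hvw hnt hvin hwout)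
    (le_wdist_deleteEdges_of_forall_boundary_edge hchild hmin)

/-- Let `T` be a shortest path tree to `t` in `G`, `uu'` a tree edge
with `u'` the parent of `u` (so removing `uu'` from `T` disconnects `u` from `t`
but not `u'`). A vertex `x` belongs to the subtree `T_u` iff `x` cannot reach `t`
in `T − uu'`. If `vw` is a non-tree edge with `v ∈ T_u`, `w ∉ T_u`, minimizing
`d_G(u,v) + ℓ(vw) + d_G(w,t)` among all such edges, then
`d_{G−uu'}(u,t) = d_G(u,v) + ℓ(vw) + d_G(w,t)`. -/
theorem replacement_dist_eq_min_detour {V : Type*} [Fintype V] [DecidableEq V]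
    (G T : SimpleGraph V) (ℓ : Sym2 V → ℝ≥0∞) (t : V)
    (hTG : T ≤ G) (hT : T.IsTree)
    (hspt : ∀ x : V, wdist T ℓ x t = wdist G ℓ x t)
    (u u' : V) (huu' : T.Adj u u')
    (hchild : ¬ (T.deleteEdges {s(u, u')}).Reachable u t)
    (hparent : (T.deleteEdges {s(u, u')}).Reachable u' t)
    (v w : V) (hvw : G.Adj v w) (hnt : ¬ T.Adj v w)
    (hvin : ¬ (T.deleteEdges {s(u, u')}).Reachable v t)
    (hwout : (T.deleteEdges {s(u, u')}).Reachable w t)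
    (hmin : ∀ v' w' : V, G.Adj v' w' → ¬ T.Adj v' w' →
      ¬ (T.deleteEdges {s(u, u')}).Reachable v' t →
      (T.deleteEdges {s(u, u')}).Reachable w' t →
      wdist G ℓ u v + ℓ s(v, w) + wdist G ℓ w t ≤
        wdist G ℓ u v' + ℓ s(v', w') + wdist G ℓ w' t)
    (hconn : (G.deleteEdges {s(u, u')}).Reachable u t) :
    wdist (G.deleteEdges {s(u, u')}) ℓ u t =
      wdist G ℓ u v + ℓ s(v, w) + wdist G ℓ w t :=
  replacement_dist_eq_min_detour_general G T ℓ t hTG hT hspt u u' huu' hchild hparent v w hvw hnt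
    hvin hwout hmin
end
end

section
/- The potential satisfies the recursion y(v) = min over neighbors u of v of max{ℓ(vu) + y(u), s_v^{-vu}} for every vertex v ≠ t, where y(t) = 0. -/
open scoped ENNReal

noncomputable section

/-!
The robust length of a walk `cons (vu) Q` is `max (ℓ(vu) + Val(Q)) s_v^{-vu}`, so the recursion
is the Bellman equation of `Val`, up to the restriction to paths. Splitting a `v`-`t` path at
its first edge gives `≥`. For `≤`, prepend `vu` to a `u`-`t` path `Q`; if `Q` already passes
through `v`, use instead its suffix from `v`, which is a path whose robust length is at most
`Val(Q)`, since `Val` can only grow when a walk is prepended.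
-/

namespace SimpleGraph.Walk

variable {V : Type*} {G : SimpleGraph V} (ℓ : Sym2 V → ℝ≥0∞) (t : V)

theorem wlen_cons {v u w : V} (h : G.Adj v u) (q : G.Walk u w) :
    wlen ℓ (cons h q) = ℓ s(v, u) + wlen ℓ q := by
  simp [wlen]

theorem wlen_append {u v w : V} (p : G.Walk u v) (q : G.Walk v w) :
    wlen ℓ (p.append q) = wlen ℓ p + wlen ℓ q := by
  simp [wlen, edges_append]

theorem detourSup_le_detourSup_append {u v : V} (p : G.Walk u v) (q : G.Walk v t) :
    detourSup G ℓ t q ≤ detourSup G ℓ t (p.append q) := by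
  induction p with
  | nil => rfl
  | cons h p ih =>
    rw [cons_append, detourSup]
    exact (ih q).trans (le_add_self.trans (le_max_right _ _))

theorem rVal_cons {v u : V} (h : G.Adj v u) (q : G.Walk u t) :
    rVal G ℓ t (cons h q) = max (ℓ s(v, u) + rVal G ℓ t q) (sval G ℓ t s(v, u) v) := by
  simp only [rVal, detourSup, wlen_cons, ← max_add_add_left]
  rw [max_left_comm, max_comm]

theorem rVal_le_rVal_append {u v : V} (p : G.Walk u v) (q : G.Walk v t) :
    rVal G ℓ t q ≤ rVal G ℓ t (p.append q) :=
  max_le_max (by rw [wlen_append]; exact le_add_self) (detourSup_le_detourSup_append ℓ t p q)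

end SimpleGraph.Walk

section Potential

open SimpleGraph Walk

variable {V : Type*} {G : SimpleGraph V} (ℓ : Sym2 V → ℝ≥0∞) (t : V)

theorem pot_self : pot G ℓ t t = 0 :=
  le_antisymm ((iInf_le _ ⟨nil, IsPath.nil⟩).trans (by simp [rVal, wlen, detourSup])) zero_le

theorem pot_le_rVal_of_isPath_of_mem_support {u v : V} {q : G.Walk u t} (hq : q.IsPath)
    (hv : v ∈ q.support) : pot G ℓ t v ≤ rVal G ℓ t q := by
  classical
  calc pot G ℓ t v ≤ rVal G ℓ t (q.dropUntil v hv) :=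
        iInf_le (fun p : {p : G.Walk v t // p.IsPath} => rVal G ℓ t p.1) ⟨_, hq.dropUntil hv⟩
    _ ≤ rVal G ℓ t ((q.takeUntil v hv).append (q.dropUntil v hv)) :=
        rVal_le_rVal_append ℓ t _ _
    _ = rVal G ℓ t q := by rw [take_spec]

theorem pot_le_of_adj_of_isPath {v u : V} (h : G.Adj v u) {q : G.Walk u t} (hq : q.IsPath) :
    pot G ℓ t v ≤ max (ℓ s(v, u) + rVal G ℓ t q) (sval G ℓ t s(v, u) v) := by
  by_cases hv : v ∈ q.support
  · exact (pot_le_rVal_of_isPath_of_mem_support ℓ t hq hv).trans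
      (le_add_self.trans (le_max_left _ _))
  · exact (iInf_le _ ⟨cons h q, hq.cons hv⟩).trans (rVal_cons ℓ t h q).le

theorem pot_le_of_adj {v u : V} (h : G.Adj v u) :
    pot G ℓ t v ≤ max (ℓ s(v, u) + pot G ℓ t u) (sval G ℓ t s(v, u) v) := by
  calc pot G ℓ t v
      ≤ ⨅ q : {q : G.Walk u t // q.IsPath},
          max (ℓ s(v, u) + rVal G ℓ t q.1) (sval G ℓ t s(v, u) v) :=
        le_iInf fun q => pot_le_of_adj_of_isPath ℓ t h q.2
    _ = max (ℓ s(v, u) + pot G ℓ t u) (sval G ℓ t s(v, u) v) := by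
        rw [pot, ENNReal.add_iInf, iInf_sup_eq]

theorem iInf_adj_le_pot {v : V} (hv : v ≠ t) :
    ⨅ (u : V) (_ : G.Adj v u), max (ℓ s(v, u) + pot G ℓ t u) (sval G ℓ t s(v, u) v) ≤
      pot G ℓ t v := by
  refine le_iInf fun ⟨p, hp⟩ => ?_
  cases p with
  | nil => exact absurd rfl hv
  | @cons _ u _ h q =>
    have hu : pot G ℓ t u ≤ rVal G ℓ t q :=
      iInf_le (fun q : {q : G.Walk u t // q.IsPath} => rVal G ℓ t q.1) ⟨q, hp.of_cons⟩
    rw [rVal_cons]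
    exact (iInf₂_le u h).trans (by gcongr)

end Potential

theorem potential_recursion_general {V : Type*}
    (G : SimpleGraph V) (ℓ : Sym2 V → ℝ≥0∞) (t : V) :
    pot G ℓ t t = 0 ∧
    ∀ v : V, v ≠ t →
      pot G ℓ t v =
        ⨅ (u : V) (_ : G.Adj v u),
          max (ℓ s(v, u) + pot G ℓ t u) (sval G ℓ t s(v, u) v) :=
  ⟨pot_self ℓ t, fun _ hv =>
    le_antisymm (le_iInf₂ fun _ h => pot_le_of_adj ℓ t h) (iInf_adj_le_pot ℓ t hv)⟩

/-- The potential satisfies the recursion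
`y(v) = min over neighbors u of v of max{ℓ(vu) + y(u), s_v^{-vu}}` for every
vertex `v ≠ t`, where `y(t) = 0`; here `G` is 2-edge-connected towards `t`, i.e.
`t` stays reachable from every vertex after deleting any single edge. -/
theorem potential_recursion {V : Type*} [Fintype V] [DecidableEq V]
    (G : SimpleGraph V) (ℓ : Sym2 V → ℝ≥0∞) (t : V)
    (h2ec : ∀ (e : Sym2 V) (v : V), (G.deleteEdges {e}).Reachable v t) :
    pot G ℓ t t = 0 ∧
    ∀ v : V, v ≠ t →
      pot G ℓ t v =
        ⨅ (u : V) (_ : G.Adj v u),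
          max (ℓ s(v, u) + pot G ℓ t u) (sval G ℓ t s(v, u) v) :=
  potential_recursion_general G ℓ t
end
end
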